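/- Let K ≥ 1 and let x_1 ≤ x_2 ≤ … ≤ x_K and y_1 ≤ y_2 ≤ … ≤ y_K be real numbers. Let P = (1/K)·∑_{i=1}^K δ_{x_i} and Q = (1/K)·∑_{i=1}^K δ_{y_i} be the discrete uniform measures with these realizations. Then P second-order stochastically dominates Q if and only if for every k ∈ {1, …, K}, ∑_{i=1}^k x_i ≥ ∑_{i=1}^k y_i. -/

import Mathlib

open MeasureTheory ProbabilityTheory
open scoped NNReal ENNReal

/-- `P` second-order stochastically dominates `Q`. -/
def SSD (P Q : Measure ℝ) : Prop :=
  ∀ u : ℝ, (∫ z in Set.Iic u, (cdf P z - cdf Q z)) ≤ 0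

/-- The discrete uniform measure with `K` equiprobable realizations `x 0, …, x (K-1)`. -/
noncomputable def discUnif (K : ℕ) (x : Fin K → ℝ) : Measure ℝ :=
  ((K : ℝ≥0∞))⁻¹ • ∑ i : Fin K, Measure.dirac (x i)

/-!
Integrating the step function `cdf (discUnif K x)` gives
`∫ z in Iic u, cdf (discUnif K x) z = K⁻¹ * ∑ i, (u - x i)⁺`, so SSD amounts to the pointwise
inequality `∑ i, (u - x i)⁺ ≤ ∑ i, (u - y i)⁺` of these convex piecewise-linear functions.
For sorted `x` the positive terms at `u` are exactly those of an initial segment `i ≤ k`, and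
`∑ i ≤ k, (u - y i) ≤ ∑ i, (u - y i)⁺`, so prefix-sum dominance gives the inequality; conversely,
evaluating it at the kink `u = y k` recovers the `k`-th prefix-sum inequality.
-/

open Finset

section SumPosPart

variable {ι M : Type*} [Fintype ι] [AddCommMonoid M] [LinearOrder M]

lemma sum_max_zero_eq_sum_of_nonneg_of_nonpos {s : Finset ι} {f : ι → M}
    (hs : ∀ i ∈ s, 0 ≤ f i) (hsc : ∀ i ∉ s, f i ≤ 0) :
    ∑ i, max (f i) 0 = ∑ i ∈ s, f i := by
  rw [← sum_subset (subset_univ s) fun i _ hi => max_eq_right (hsc i hi)]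
  exact sum_congr rfl fun i hi => max_eq_left (hs i hi)

lemma sum_le_sum_max_zero [IsOrderedAddMonoid M] (s : Finset ι) (f : ι → M) :
    ∑ i ∈ s, f i ≤ ∑ i, max (f i) 0 :=
  (sum_le_sum fun _ _ => le_max_left _ _).trans
    (sum_le_sum_of_subset_of_nonneg (subset_univ s) fun _ _ _ => le_max_right _ _)

variable [LinearOrder ι] [LocallyFiniteOrderBot ι] {x y : ι → ℝ}

lemma sum_max_sub_eq_sum_Iic (hx : Monotone x) {u : ℝ} {k : ι} (hk : x k ≤ u)
    (hk' : ∀ i, k < i → u ≤ x i) :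
    ∑ i, max (u - x i) 0 = ∑ i ∈ Iic k, (u - x i) :=
  sum_max_zero_eq_sum_of_nonneg_of_nonpos
    (fun _ hi => sub_nonneg.2 ((hx (mem_Iic.1 hi)).trans hk))
    (fun i hi => sub_nonpos.2 (hk' i (not_le.1 (mem_Iic.not.1 hi))))

lemma sum_max_sub_le_of_forall_sum_Iic_le (hx : Monotone x)
    (h : ∀ k, ∑ i ∈ Iic k, y i ≤ ∑ i ∈ Iic k, x i) (u : ℝ) :
    ∑ i, max (u - x i) 0 ≤ ∑ i, max (u - y i) 0 := by
  by_cases hu : ∃ k, x k < u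
  swap
  · push Not at hu
    rw [sum_max_zero_eq_sum_of_nonneg_of_nonpos (s := ∅) (by simp) fun i _ => sub_nonpos.2 (hu i),
      sum_empty]
    exact sum_nonneg fun _ _ => le_max_right _ _
  -- `k` is the last index with `x k < u`; by monotonicity the positive terms are those with `i ≤ k`
  obtain ⟨k₀, hk₀⟩ := hu
  obtain ⟨k, hk, hmax⟩ := (univ.filter fun i => x i < u).exists_max_image id
    ⟨k₀, mem_filter.2 ⟨mem_univ _, hk₀⟩⟩
  have hku : x k < u := (mem_filter.1 hk).2
  have hk' : ∀ i, k < i → u ≤ x i := fun i hi => not_lt.1 fun hiu =>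
    hi.not_ge (hmax i (mem_filter.2 ⟨mem_univ _, hiu⟩))
  calc ∑ i, max (u - x i) 0 = ∑ i ∈ Iic k, (u - x i) := sum_max_sub_eq_sum_Iic hx hku.le hk'
    _ ≤ ∑ i ∈ Iic k, (u - y i) := by simp only [sum_sub_distrib]; linarith [h k]
    _ ≤ ∑ i, max (u - y i) 0 := sum_le_sum_max_zero _ _

lemma sum_Iic_le_of_forall_sum_max_sub_le (hy : Monotone y)
    (h : ∀ u, ∑ i, max (u - x i) 0 ≤ ∑ i, max (u - y i) 0) (k : ι) :
    ∑ i ∈ Iic k, y i ≤ ∑ i ∈ Iic k, x i := by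
  have key : ∑ i ∈ Iic k, (y k - x i) ≤ ∑ i ∈ Iic k, (y k - y i) :=
    calc ∑ i ∈ Iic k, (y k - x i) ≤ ∑ i, max (y k - x i) 0 := sum_le_sum_max_zero _ _
      _ ≤ ∑ i, max (y k - y i) 0 := h (y k)
      _ = ∑ i ∈ Iic k, (y k - y i) := sum_max_sub_eq_sum_Iic hy le_rfl fun i hi => hy hi.le
  simp only [sum_sub_distrib] at key
  linarith

lemma forall_sum_max_sub_le_iff (hx : Monotone x) (hy : Monotone y) :
    (∀ u, ∑ i, max (u - x i) 0 ≤ ∑ i, max (u - y i) 0) ↔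
      ∀ k, ∑ i ∈ Iic k, y i ≤ ∑ i ∈ Iic k, x i :=
  ⟨sum_Iic_le_of_forall_sum_max_sub_le hy, sum_max_sub_le_of_forall_sum_Iic_le hx⟩

end SumPosPart

lemma discUnif_real_apply (K : ℕ) (x : Fin K → ℝ) {s : Set ℝ} (hs : MeasurableSet s) :
    (discUnif K x).real s = (K : ℝ)⁻¹ * ∑ i, s.indicator 1 (x i) := by
  simp [discUnif, measureReal_def, Measure.dirac_apply' _ hs, Set.indicator]

instance isProbabilityMeasure_discUnif (K : ℕ) [NeZero K] (x : Fin K → ℝ) :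
    IsProbabilityMeasure (discUnif K x) :=
  ⟨by simp [discUnif, ENNReal.inv_mul_cancel (NeZero.ne (K : ℝ≥0∞))]⟩

lemma cdf_discUnif (K : ℕ) [NeZero K] (x : Fin K → ℝ) (z : ℝ) :
    cdf (discUnif K x) z = (K : ℝ)⁻¹ * ∑ i, (Set.Ici (x i)).indicator 1 z := by
  rw [cdf_eq_real, discUnif_real_apply K x measurableSet_Iic]
  simp [Set.indicator]

lemma integrableOn_Iic_indicator_Ici_one (a u : ℝ) :
    IntegrableOn ((Set.Ici a).indicator (1 : ℝ → ℝ)) (Set.Iic u) :=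
  (integrable_indicator_iff measurableSet_Ici).2 (integrableOn_const (by simp [Set.Ici_inter_Iic]))

lemma setIntegral_Iic_indicator_Ici_one (a u : ℝ) :
    ∫ z in Set.Iic u, (Set.Ici a).indicator (1 : ℝ → ℝ) z = max (u - a) 0 := by
  rw [integral_indicator_one measurableSet_Ici, measureReal_restrict_apply measurableSet_Ici,
    Set.Ici_inter_Iic, Real.volume_real_Icc]

lemma integrableOn_Iic_cdf_discUnif (K : ℕ) [NeZero K] (x : Fin K → ℝ) (u : ℝ) :
    IntegrableOn (cdf (discUnif K x)) (Set.Iic u) := by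
  simp_rw [funext (cdf_discUnif K x)]
  exact (integrable_finsetSum _ fun i _ => integrableOn_Iic_indicator_Ici_one (x i) u).const_mul _

lemma setIntegral_Iic_cdf_discUnif (K : ℕ) [NeZero K] (x : Fin K → ℝ) (u : ℝ) :
    ∫ z in Set.Iic u, cdf (discUnif K x) z = (K : ℝ)⁻¹ * ∑ i, max (u - x i) 0 := by
  simp_rw [cdf_discUnif, integral_const_mul,
    integral_finsetSum _ fun i _ => integrableOn_Iic_indicator_Ici_one (x i) u,
    setIntegral_Iic_indicator_Ici_one]

lemma ssd_discUnif_iff (K : ℕ) [NeZero K] (x y : Fin K → ℝ) :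
    SSD (discUnif K x) (discUnif K y) ↔
      ∀ u, ∑ i, max (u - x i) 0 ≤ ∑ i, max (u - y i) 0 := by
  refine forall_congr' fun u => ?_
  rw [integral_sub (integrableOn_Iic_cdf_discUnif K x u) (integrableOn_Iic_cdf_discUnif K y u),
    setIntegral_Iic_cdf_discUnif, setIntegral_Iic_cdf_discUnif, ← mul_sub,
    inv_mul_le_iff₀ (Nat.cast_pos.2 (NeZero.pos K)), mul_zero, sub_nonpos]

/-- SSD between discrete uniform distributions with ordered realizations is characterized
by dominance of all partial sums. -/
theorem ssd_discrete_uniform_iff (K : ℕ) (hK : 1 ≤ K) (x y : Fin K → ℝ)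
    (hx : Monotone x) (hy : Monotone y) :
    SSD (discUnif K x) (discUnif K y) ↔
      ∀ k : Fin K, ∑ i ∈ Finset.Iic k, y i ≤ ∑ i ∈ Finset.Iic k, x i := by
  have : NeZero K := NeZero.of_pos hK
  rw [ssd_discUnif_iff, forall_sum_max_sub_le_iff hx hy]
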